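/- arXiv:2409.18404 — 4 statements merged into one kernel-verified Lean document; each statement's English description precedes it below -/
import Mathlib

section
/- Let k and M be positive integers, and let M = p_1^{e_1} p_2^{e_2} ⋯ p_l^{e_l} be the prime factorization of M into distinct primes p_1, …, p_l. For any integers n, m ≥ max{e_j : 1 ≤ j ≤ l} satisfying n ≡ m (mod φ(M)), we have B_n^{(-k)} ≡ B_m^{(-k)} (mod M). -/
/-- Stirling numbers of the second kind. -/
def stirling2 : ℕ → ℕ → ℕ
  | 0, 0 => 1
  | 0, _ + 1 => 0
  | _ + 1, 0 => 0
  | n + 1, m + 1 => (m + 1) * stirling2 n (m + 1) + stirling2 n m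

lemma stirling2_succ_succ (n m : ℕ) :
    stirling2 (n+1) (m+1) = (m + 1) * stirling2 n (m + 1) + stirling2 n m := rfl

lemma stirling2_succ_zero (n : ℕ) : stirling2 (n+1) 0 = 0 := rfl

lemma stirling2_eq_zero_of_lt : ∀ {n m : ℕ}, n < m → stirling2 n m = 0 := by
  intro n
  induction n with
  | zero => intro m h; match m, h with | m+1, _ => rfl
  | succ n ih =>
    intro m h
    match m, h with
    | m+1, h =>
      rw [stirling2_succ_succ, ih (by omega), ih (by omega)]; ring

lemma choose_id (m j : ℕ) :
    (m+1) * (m+1).choose j = (j+1) * m.choose j + j * m.choose (j-1) + m * m.choose j := by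
  cases j with
  | zero => simp; ring
  | succ j =>
    have h1 : (m+1) * m.choose j = (m+1).choose (j+1) * (j+1) := Nat.add_one_mul_choose_eq m j
    have h2 : (m+1).choose (j+1) = m.choose j + m.choose (j+1) := Nat.choose_succ_succ m j
    simp only [Nat.succ_sub_one]
    nlinarith [h1, h2]

lemma choose_id2 (m j : ℕ) :
    (m+1) * m.choose j = (j+1) * m.choose j + (j+1) * m.choose (j+1) := by
  have h1 : (m+1) * m.choose j = (m+1).choose (j+1) * (j+1) := Nat.add_one_mul_choose_eq m j
  have h2 : (m+1).choose (j+1) = m.choose j + m.choose (j+1) := Nat.choose_succ_succ m j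
  nlinarith [h1, h2]

open Finset in
lemma sum_shift (g : ℕ → ℤ) (n : ℕ) (h0 : g 0 = 0) (htop : g (n+1) = 0) :
    ∑ m ∈ range (n+1), g (m+1) = ∑ m ∈ range (n+1), g m := by
  have : ∑ m ∈ range (n+2), g m = ∑ m ∈ range (n+1), g (m+1) + g 0 :=
    Finset.sum_range_succ' g (n+1)
  rw [Finset.sum_range_succ, htop, add_zero] at this
  omega

open Finset in
lemma L1 (n j : ℕ) :
    ∑ m ∈ range (n+1), (-1:ℤ)^(n+m) * m.factorial * stirling2 n m * m.choose j
      = j.factorial * stirling2 (n+1) (j+1) := by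
  induction n generalizing j with
  | zero =>
    cases j with
    | zero => simp [stirling2]
    | succ j => simp [stirling2, stirling2_eq_zero_of_lt]
  | succ n ih =>
    have hstep : ∑ m ∈ range (n+2), (-1:ℤ)^(n+1+m) * m.factorial * stirling2 (n+1) m * m.choose j
        = ∑ m ∈ range (n+1), (-1:ℤ)^(n+1+(m+1)) * (m+1).factorial * stirling2 (n+1) (m+1) * (m+1).choose j := by
      rw [Finset.sum_range_succ' _ (n+1)]
      simp [stirling2_succ_zero]
    rw [hstep]
    have hsplit : ∀ m ∈ range (n+1),
        (-1:ℤ)^(n+1+(m+1)) * (m+1).factorial * stirling2 (n+1) (m+1) * (m+1).choose j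
        = (-1:ℤ)^(n+m) * (m+1).factorial * ((m+1) * stirling2 n (m+1)) * (m+1).choose j
          + (-1:ℤ)^(n+m) * m.factorial * stirling2 n m * (((m:ℤ)+1) * ((m+1).choose j : ℤ)) := by
      intro m _
      rw [stirling2_succ_succ]
      have e1 : (-1:ℤ)^(n+1+(m+1)) = (-1:ℤ)^(n+m) := by
        rw [show n+1+(m+1) = (n+m)+2 from by ring, pow_add]; ring
      rw [e1]
      push_cast [Nat.factorial_succ]
      ring
    rw [Finset.sum_congr rfl hsplit, Finset.sum_add_distrib]
    have hshift : ∑ m ∈ range (n+1),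
        (-1:ℤ)^(n+m) * (m+1).factorial * ((m+1) * stirling2 n (m+1)) * (m+1).choose j
        = ∑ m ∈ range (n+1), (-1:ℤ)^(n+m+1) * m.factorial * (m * stirling2 n m) * m.choose j := by
      rw [← sum_shift (fun m => (-1:ℤ)^(n+m+1) * m.factorial * (m * stirling2 n m) * m.choose j) n
        (by simp) (by beta_reduce; rw [stirling2_eq_zero_of_lt (Nat.lt_succ_self n)]; ring)]
      apply Finset.sum_congr rfl
      intro m _
      beta_reduce
      rw [show n+(m+1)+1 = (n+m)+2 from by ring, pow_add]
      push_cast [Nat.factorial_succ]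
      ring
    rw [hshift, ← Finset.sum_add_distrib]
    have hpt : ∀ m ∈ range (n+1),
        (-1:ℤ)^(n+m+1) * m.factorial * (m * stirling2 n m) * m.choose j
          + (-1:ℤ)^(n+m) * m.factorial * stirling2 n m * (((m:ℤ)+1) * ((m+1).choose j : ℤ))
        = ((j:ℤ)+1) * ((-1:ℤ)^(n+m) * m.factorial * stirling2 n m * m.choose j)
          + (j:ℤ) * ((-1:ℤ)^(n+m) * m.factorial * stirling2 n m * m.choose (j-1)) := by
      intro m _
      have hc' : ((m:ℤ)+1) * ((m+1).choose j : ℤ)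
          = ((j:ℤ)+1) * m.choose j + (j:ℤ) * m.choose (j-1) + (m:ℤ) * m.choose j := by
        exact_mod_cast congrArg (Nat.cast : ℕ → ℤ) (choose_id m j)
      rw [pow_succ]
      linear_combination ((-1:ℤ)^(n+m) * m.factorial * stirling2 n m) * hc'
    rw [Finset.sum_congr rfl hpt, Finset.sum_add_distrib, ← Finset.mul_sum, ← Finset.mul_sum,
      ih j, ih (j-1)]
    rw [show ((stirling2 (n+1+1) (j+1) : ℕ) : ℤ)
        = ((j:ℤ)+1) * stirling2 (n+1) (j+1) + stirling2 (n+1) j from by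
      rw [stirling2_succ_succ (n+1) j]; push_cast; ring]
    cases j with
    | zero => simp [stirling2_succ_zero]
    | succ j =>
      have hf : (((j+1).factorial : ℤ)) = ((j:ℤ)+1) * (j.factorial : ℤ) := by
        push_cast [Nat.factorial_succ]; ring
      simp only [Nat.succ_sub_one, hf]
      push_cast
      ring

open Finset in
lemma L2 (k m : ℕ) :
    ((m:ℤ)+1)^k = ∑ j ∈ range (k+1), (j.factorial : ℤ) * (m.choose j) * stirling2 (k+1) (j+1) := by
  induction k with
  | zero => simp [stirling2]
  | succ k ih =>
    have target_split : ∑ j ∈ range (k+2), (j.factorial : ℤ) * (m.choose j) * stirling2 (k+2) (j+1)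
        = (∑ j ∈ range (k+1), ((j:ℤ)+1) * j.factorial * (m.choose j) * stirling2 (k+1) (j+1))
          + ∑ j ∈ range (k+1), ((j+1).factorial : ℤ) * (m.choose (j+1)) * stirling2 (k+1) (j+1) := by
      have h1 : ∀ j ∈ range (k+2), (j.factorial : ℤ) * (m.choose j) * stirling2 (k+2) (j+1)
          = ((j:ℤ)+1) * j.factorial * (m.choose j) * stirling2 (k+1) (j+1)
            + (j.factorial : ℤ) * (m.choose j) * stirling2 (k+1) j := by
        intro j _
        rw [stirling2_succ_succ (k+1) j]
        push_cast
        ring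
      rw [Finset.sum_congr rfl h1, Finset.sum_add_distrib]
      congr 1
      · -- drop the top term of the first sum (j = k+1): stirling2 (k+1) (k+2) = 0
        rw [Finset.sum_range_succ, stirling2_eq_zero_of_lt (Nat.lt_succ_self (k+1))]
        push_cast
        ring
      · -- shift the second sum (j = 0 term vanishes: stirling2 (k+1) 0 = 0)
        rw [Finset.sum_range_succ' _ (k+1)]
        simp [stirling2_succ_zero]
    rw [target_split]
    have lhs_eq : ((m:ℤ)+1)^(k+1) = ((m:ℤ)+1) * ((m:ℤ)+1)^k := by ring
    rw [lhs_eq, ih, Finset.mul_sum, ← Finset.sum_add_distrib]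
    apply Finset.sum_congr rfl
    intro j _
    have hc : ((m:ℤ)+1) * (m.choose j : ℤ)
        = ((j:ℤ)+1) * m.choose j + ((j:ℤ)+1) * m.choose (j+1) := by
      exact_mod_cast congrArg (Nat.cast : ℕ → ℤ) (choose_id2 m j)
    have hf : (((j+1).factorial : ℤ)) = ((j:ℤ)+1) * (j.factorial : ℤ) := by
      push_cast [Nat.factorial_succ]; ring
    rw [hf]
    linear_combination ((j.factorial : ℤ) * stirling2 (k+1) (j+1)) * hc

/-- The poly-Bernoulli number `B_n^{(-k)}` with negative upper index `-k`. -/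
def polyBernoulliB (k n : ℕ) : ℤ :=
  (-1 : ℤ) ^ n * ∑ m ∈ Finset.range (n + 1),
    (-1 : ℤ) ^ m * (m.factorial : ℤ) * (stirling2 n m : ℤ) * ((m : ℤ) + 1) ^ k

/-- The poly-Bernoulli number of type C, `C_n^{(-k)}`, with negative upper index `-k`. -/
def polyBernoulliC (k n : ℕ) : ℤ :=
  (-1 : ℤ) ^ n * ∑ m ∈ Finset.range (n + 1),
    (-1 : ℤ) ^ m * (m.factorial : ℤ) * (stirling2 (n + 1) (m + 1) : ℤ) * ((m : ℤ) + 1) ^ k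

open Finset in
lemma B_eq (k n : ℕ) :
    polyBernoulliB k n = ∑ j ∈ range (k+1),
      ((j.factorial : ℤ))^2 * stirling2 (n+1) (j+1) * stirling2 (k+1) (j+1) := by
  rw [polyBernoulliB, Finset.mul_sum]
  have h1 : ∀ m ∈ range (n+1),
      (-1:ℤ)^n * ((-1:ℤ)^m * m.factorial * stirling2 n m * ((m:ℤ)+1)^k)
      = ∑ j ∈ range (k+1),
          (-1:ℤ)^(n+m) * m.factorial * stirling2 n m * (m.choose j)
            * ((j.factorial : ℤ) * stirling2 (k+1) (j+1)) := by
    intro m _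
    rw [L2 k m, Finset.mul_sum, Finset.mul_sum]
    apply Finset.sum_congr rfl
    intro j _
    rw [pow_add]
    ring
  rw [Finset.sum_congr rfl h1, Finset.sum_comm]
  apply Finset.sum_congr rfl
  intro j _
  rw [← Finset.sum_mul, L1 n j]
  ring

open Finset in
lemma B_symm (k n : ℕ) : polyBernoulliB k n = polyBernoulliB n k := by
  rw [B_eq, B_eq]
  have ext : ∀ (a b : ℕ),
      ∑ j ∈ range (a+1), ((j.factorial : ℤ))^2 * stirling2 (b+1) (j+1) * stirling2 (a+1) (j+1)
      = ∑ j ∈ range (a+b+2), ((j.factorial : ℤ))^2 * stirling2 (b+1) (j+1) * stirling2 (a+1) (j+1) := by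
    intro a b
    apply Finset.sum_subset
    · intro x hx; simp only [Finset.mem_range] at *; omega
    · intro x _ hx
      simp only [Finset.mem_range, not_lt] at hx
      rw [stirling2_eq_zero_of_lt (show a+1 < x+1 from by omega)]
      ring
  rw [ext k n, ext n k, show n+k+2 = k+n+2 from by ring]
  apply Finset.sum_congr rfl
  intro j _
  ring

lemma pow_congr_aux (M a n m : ℕ) (hM : 0 < M) (ha : 0 < a) (hmn : m ≤ n)
    (hn : ∀ q : ℕ, M.factorization q ≤ n) (hm : ∀ q : ℕ, M.factorization q ≤ m)
    (hdvd : M.totient ∣ n - m) : a ^ n ≡ a ^ m [MOD M] := by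
  have hle : a ^ m ≤ a ^ n := Nat.pow_le_pow_right ha hmn
  rw [Nat.ModEq.comm, Nat.modEq_iff_dvd' hle]
  have key : ∀ p : ℕ, p.Prime → p ^ (M.factorization p) ∣ a ^ n - a ^ m := by
    intro p hp
    set e := M.factorization p with he
    by_cases hpa : p ∣ a
    · have h1 : p ^ e ∣ a ^ n := dvd_trans (pow_dvd_pow_of_dvd hpa e) (pow_dvd_pow a (hn p))
      have h2 : p ^ e ∣ a ^ m := dvd_trans (pow_dvd_pow_of_dvd hpa e) (pow_dvd_pow a (hm p))
      exact Nat.dvd_sub h1 h2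
    · have hcop : Nat.Coprime a (p ^ e) :=
        Nat.Coprime.pow_right e ((Nat.Prime.coprime_iff_not_dvd hp).mpr hpa).symm
      have hpeM : p ^ e ∣ M := Nat.ordProj_dvd M p
      have htot : (p ^ e).totient ∣ n - m :=
        dvd_trans (Nat.totient_dvd_of_dvd hpeM) hdvd
      obtain ⟨t, ht⟩ := htot
      have heuler : a ^ (p ^ e).totient ≡ 1 [MOD p ^ e] := Nat.ModEq.pow_totient hcop
      have hpow : a ^ (n - m) ≡ 1 [MOD p ^ e] := by
        rw [ht, pow_mul]
        calc (a ^ (p ^ e).totient) ^ t ≡ 1 ^ t [MOD p ^ e] := heuler.pow t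
          _ = 1 := one_pow t
      have hn_eq : a ^ n = a ^ m * a ^ (n - m) := by
        rw [← pow_add]
        congr 1
        omega
      have : a ^ n ≡ a ^ m * 1 [MOD p ^ e] := by
        rw [hn_eq]
        exact Nat.ModEq.mul_left _ hpow
      rw [mul_one] at this
      rw [Nat.ModEq.comm, Nat.modEq_iff_dvd' hle] at this
      exact this
  by_cases hd : a ^ n - a ^ m = 0
  · simp [hd]
  · rw [← Nat.factorization_le_iff_dvd hM.ne' hd]
    intro p
    by_cases hp : p.Prime
    · exact (hp.pow_dvd_iff_le_factorization hd).mp (key p hp)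
    · simp [Nat.factorization_eq_zero_of_not_prime M hp]

lemma pow_congr (M a n m : ℕ) (hM : 0 < M) (ha : 0 < a)
    (hn : ∀ q : ℕ, M.factorization q ≤ n) (hm : ∀ q : ℕ, M.factorization q ≤ m)
    (hnm : n ≡ m [MOD M.totient]) : a ^ n ≡ a ^ m [MOD M] := by
  rcases le_total m n with h | h
  · exact pow_congr_aux M a n m hM ha h hn hm ((Nat.modEq_iff_dvd' h).mp hnm.symm)
  · exact (pow_congr_aux M a m n hM ha h hm hn ((Nat.modEq_iff_dvd' h).mp hnm)).symm

open Finset in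
lemma modEq_sum {s : Finset ℕ} {f g : ℕ → ℤ} {N : ℤ}
    (h : ∀ i ∈ s, f i ≡ g i [ZMOD N]) : (∑ i ∈ s, f i) ≡ (∑ i ∈ s, g i) [ZMOD N] := by
  classical
  induction s using Finset.induction_on with
  | empty => rfl
  | insert _ _ hx ih =>
    rename_i a s'
    rw [Finset.sum_insert hx, Finset.sum_insert hx]
    exact Int.ModEq.add (h a (Finset.mem_insert_self a s'))
      (ih (fun i hi => h i (Finset.mem_insert_of_mem hi)))

theorem polyBernoulliB_period_general (k M : ℕ) (hk : 0 < k) (hM : 0 < M)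
    (n m : ℕ) (hn : ∀ q : ℕ, M.factorization q ≤ n)
    (hm : ∀ q : ℕ, M.factorization q ≤ m)
    (hnm : n ≡ m [MOD M.totient]) :
    polyBernoulliB k n ≡ polyBernoulliB k m [ZMOD (M : ℤ)] := by
  rw [B_symm k n, B_symm k m]
  rw [polyBernoulliB, polyBernoulliB]
  apply Int.ModEq.mul_left
  apply modEq_sum
  intro j _
  apply Int.ModEq.mul_left
  have hpow : ((j+1 : ℕ) : ℤ) ^ n ≡ ((j+1 : ℕ) : ℤ) ^ m [ZMOD (M : ℤ)] := by
    have := pow_congr M (j+1) n m hM (Nat.succ_pos j) hn hm hnm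
    have := Int.natCast_modEq_iff.mpr this
    push_cast at this
    exact this
  push_cast at hpow ⊢
  exact hpow
end

section
/- Let p be an odd prime and k a nonnegative integer. Then C_{p-2}^{(-k-1)} ≡ 0 (mod p) if k is not divisible by p-1, and C_{p-2}^{(-k-1)} ≡ 1 (mod p) if k is divisible by p-1. -/
open Finset Nat

section CommRing

variable {R : Type*} [CommRing R]

theorem sum_range_neg_one_pow_mul_choose (j : ℕ) (hj : j ≠ 0) :
    ∑ i ∈ range (j + 1), (-1 : R) ^ i * j.choose i = 0 := by
  simpa using congrArg (Int.cast : ℤ → R) (Int.alternating_sum_range_choose_of_ne hj)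

theorem natCast_mul_choose_succ (m i : ℕ) :
    (i : R) * (m + 1).choose i = (m + 1) * ((m + 1).choose i - m.choose i) := by
  rcases i with _ | i
  · simp
  · have habsorb := congrArg (Nat.cast : ℕ → R) (Nat.add_one_mul_choose_eq m i)
    rw [Nat.choose_succ_succ' m i] at habsorb ⊢
    push_cast at habsorb ⊢
    linear_combination -habsorb

theorem sum_neg_one_pow_mul_choose_mul_pow_succ (m n : ℕ) :
    ∑ i ∈ range (m + 2), (-1 : R) ^ i * (m + 1).choose i * (i : R) ^ (n + 1) =
      (m + 1) * (∑ i ∈ range (m + 2), (-1 : R) ^ i * (m + 1).choose i * (i : R) ^ n -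
        ∑ i ∈ range (m + 1), (-1 : R) ^ i * m.choose i * (i : R) ^ n) := by
  have hext : ∑ i ∈ range (m + 1), (-1 : R) ^ i * m.choose i * (i : R) ^ n =
      ∑ i ∈ range (m + 2), (-1 : R) ^ i * m.choose i * (i : R) ^ n := by
    simp [sum_range_succ _ (m + 1)]
  rw [hext, ← sum_sub_distrib, mul_sum]
  refine sum_congr rfl fun i _ => ?_
  linear_combination (-1 : R) ^ i * (i : R) ^ n * natCast_mul_choose_succ (R := R) m i

theorem neg_one_pow_mul_factorial_mul_stirling2 (n j : ℕ) :
    (-1 : R) ^ j * j ! * stirling2 n j =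
      ∑ i ∈ range (j + 1), (-1 : R) ^ i * j.choose i * (i : R) ^ n := by
  induction n generalizing j with
  | zero =>
    rcases j with _ | j
    · simp [stirling2]
    · simp [stirling2, sum_range_neg_one_pow_mul_choose]
  | succ n ih =>
    rcases j with _ | j
    · simp [stirling2]
    · rw [sum_neg_one_pow_mul_choose_mul_pow_succ, ← ih, ← ih, stirling2]
      push_cast [factorial_succ]
      ring

end CommRing

section Prime

variable {p : ℕ} [Fact p.Prime]

theorem natCast_ne_zero_of_pos_of_lt {i : ℕ} (h0 : 0 < i) (hlt : i < p) : (i : ZMod p) ≠ 0 := by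
  rw [Ne, ZMod.natCast_eq_zero_iff]
  exact Nat.not_dvd_of_pos_of_lt h0 hlt

theorem neg_one_pow_mul_factorial_mul_stirling2_prime_sub_one {j : ℕ} (hj : j ≠ 0)
    (hjp : j < p) :
    (-1 : ZMod p) ^ j * j ! * stirling2 (p - 1) j = -1 := by
  have hpow : ∀ i ∈ range j, ((i + 1 : ℕ) : ZMod p) ^ (p - 1) = 1 := fun i hi =>
    ZMod.pow_card_sub_one_eq_one
      (natCast_ne_zero_of_pos_of_lt i.succ_pos (by rw [mem_range] at hi; omega))
  have halt := sum_range_neg_one_pow_mul_choose (R := ZMod p) j hj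
  rw [sum_range_succ'] at halt
  rw [neg_one_pow_mul_factorial_mul_stirling2, sum_range_succ',
    sum_congr rfl fun i hi => by rw [hpow i hi, mul_one]]
  simp only [pow_zero, choose_zero_right, cast_one, one_mul, mul_one, cast_zero] at halt ⊢
  rw [zero_pow (Nat.sub_ne_zero_of_lt (Fact.out : p.Prime).one_lt)]
  linear_combination halt

theorem sum_Ico_one_pow (l : ℕ) :
    ∑ v ∈ Ico 1 p, (v : ZMod p) ^ l = if p - 1 ∣ l then -1 else 0 := by
  have hunits : ∑ v ∈ Ico 1 p, (v : ZMod p) ^ l = ∑ u : (ZMod p)ˣ, (u : ZMod p) ^ l :=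
    sum_bij' (fun v hv => Units.mk0 (v : ZMod p)
        (natCast_ne_zero_of_pos_of_lt (mem_Ico.mp hv).1 (mem_Ico.mp hv).2))
      (fun u _ => (u : ZMod p).val) (fun _ _ => mem_univ _)
      (fun u _ => mem_Ico.mpr ⟨Nat.pos_of_ne_zero ((ZMod.val_ne_zero _).mpr u.ne_zero),
        ZMod.val_lt _⟩)
      (fun v hv => by simp [ZMod.val_cast_of_lt (mem_Ico.mp hv).2])
      (fun u _ => Units.ext (ZMod.natCast_zmod_val _))
      (fun _ _ => rfl)
  rw [hunits, FiniteField.sum_pow_units, ZMod.card]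

end Prime

theorem polyBernoulliC_succ_eq_sum_Ico (k n : ℕ) :
    polyBernoulliC (k + 1) n =
      (-1) ^ (n + 1) *
        ∑ j ∈ Ico 1 (n + 2), (-1) ^ j * j ! * stirling2 (n + 1) j * (j : ℤ) ^ k := by
  rw [polyBernoulliC, sum_Ico_eq_sum_range, mul_sum, mul_sum]
  refine sum_congr rfl fun m _ => ?_
  rw [add_comm 1 m, factorial_succ]
  push_cast
  ring

theorem polyBernoulliC_sub_two_prime_general (p : ℕ) (hp : p.Prime) (k : ℕ) :
    (¬ (p - 1) ∣ k → polyBernoulliC (k + 1) (p - 2) ≡ 0 [ZMOD (p : ℤ)]) ∧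
    ((p - 1) ∣ k → polyBernoulliC (k + 1) (p - 2) ≡ 1 [ZMOD (p : ℤ)]) := by
  have := Fact.mk hp
  have hsign : (-1 : ZMod p) ^ (p - 1) = 1 :=
    ZMod.pow_card_sub_one_eq_one (neg_ne_zero.mpr one_ne_zero)
  have hmod : (polyBernoulliC (k + 1) (p - 2) : ZMod p) = if p - 1 ∣ k then 1 else 0 := by
    have h2 := hp.two_le
    rw [polyBernoulliC_succ_eq_sum_Ico, show p - 2 + 1 = p - 1 by omega,
      show p - 2 + 2 = p by omega]
    push_cast
    rw [hsign, one_mul, sum_congr rfl fun j hj => by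
      rw [neg_one_pow_mul_factorial_mul_stirling2_prime_sub_one
        (Nat.one_le_iff_ne_zero.mp (mem_Ico.mp hj).1) (mem_Ico.mp hj).2],
      ← mul_sum, sum_Ico_one_pow]
    split_ifs <;> simp
  refine ⟨fun hk => ?_, fun hk => ?_⟩ <;>
    rw [← ZMod.intCast_eq_intCast_iff, hmod] <;> simp [hk]

theorem polyBernoulliC_sub_two_prime (p : ℕ) (hp : p.Prime) (hodd : Odd p) (k : ℕ) :
    (¬ (p - 1) ∣ k → polyBernoulliC (k + 1) (p - 2) ≡ 0 [ZMOD (p : ℤ)]) ∧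
    ((p - 1) ∣ k → polyBernoulliC (k + 1) (p - 2) ≡ 1 [ZMOD (p : ℤ)]) :=
  polyBernoulliC_sub_two_prime_general p hp k
end

section
/- Let k and M be positive integers, and let M = p_1^{e_1} p_2^{e_2} ⋯ p_l^{e_l} be the prime factorization of M into distinct primes p_1, …, p_l. For any integer n ≥ max{e_j : 1 ≤ j ≤ l}, we have Σ_{i=0}^{φ(M)-1} B_k^{(-(n+i))} ≡ 0 (mod M). -/
/-!
Expanding `B_k^{(-(n+i))}` and exchanging the two sums, the `m`-th term of the outer sum is
`± m! S(k,m) Σ_{i<φ(M)} (m+1)^(n+i)`. The term `m = 0` vanishes because `S(k,0) = 0` for `k > 0`;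
otherwise `m ∣ m!`, and the geometric sum gives
`m Σ_{i<φ(M)} (m+1)^(n+i) = (m+1)^n ((m+1)^φ(M) - 1)`, which is divisible by `M` whenever `n`
bounds all exponents of `M`: a prime dividing `m+1` is absorbed by `(m+1)^n`, and for the other
primes Euler's theorem applies.
-/

open Finset

theorem Int.ModEq.pow_totient {x : ℤ} {m : ℕ} (h : IsCoprime (m : ℤ) x) :
    x ^ m.totient ≡ 1 [ZMOD m] := by
  rw [← ZMod.intCast_eq_intCast_iff]
  push_cast
  simpa only [Units.val_pow_eq_pow_val, IsUnit.unit_spec, Units.val_one] using congrArg Units.val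
    (ZMod.pow_totient ((ZMod.coe_int_isUnit_iff_isCoprime x m).mpr h).unit)

theorem dvd_pow_mul_pow_totient_sub_one {M n : ℕ} (hn : ∀ p, M.factorization p ≤ n) (x : ℤ) :
    (M : ℤ) ∣ x ^ n * (x ^ M.totient - 1) := by
  obtain rfl | hM := eq_or_ne M 0
  · simp
  rw [Int.natCast_dvd, Nat.dvd_iff_prime_pow_dvd_dvd]
  intro p j hp hpj
  rw [← Int.natCast_dvd]
  have hj : j ≤ M.factorization p := (hp.pow_dvd_iff_le_factorization hM).mp hpj
  by_cases hpx : (p : ℤ) ∣ x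
  · refine dvd_mul_of_dvd_left ?_ _
    push_cast
    exact (pow_dvd_pow_of_dvd hpx j).trans (pow_dvd_pow x (hj.trans (hn p)))
  · refine dvd_mul_of_dvd_right ?_ _
    have hcop : IsCoprime ((p ^ j : ℕ) : ℤ) x := by
      push_cast
      exact ((Nat.prime_iff_prime_int.mp hp).irreducible.coprime_iff_not_dvd.mpr hpx).pow_left
    obtain ⟨t, ht⟩ := Nat.totient_dvd_of_dvd hpj
    have := (Int.ModEq.pow_totient hcop).pow t
    rw [one_pow, ← pow_mul, ← ht] at this
    exact this.symm.dvd

theorem dvd_mul_sum_range_totient_pow {M n : ℕ} (hn : ∀ p, M.factorization p ≤ n) (a : ℤ) :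
    (M : ℤ) ∣ a * ∑ i ∈ range M.totient, (a + 1) ^ (n + i) := by
  have hgeom : a * ∑ i ∈ range M.totient, (a + 1) ^ (n + i)
      = (a + 1) ^ n * ((a + 1) ^ M.totient - 1) := by
    rw [← geom_sum_mul, add_sub_cancel_right]
    simp only [pow_add, ← mul_sum]
    ring
  exact hgeom ▸ dvd_pow_mul_pow_totient_sub_one hn (a + 1)

theorem sum_polyBernoulliB {ι : Type*} (s : Finset ι) (f : ι → ℕ) (k : ℕ) :
    ∑ i ∈ s, polyBernoulliB (f i) k = (-1) ^ k * ∑ m ∈ range (k + 1),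
      (-1) ^ m * (m.factorial : ℤ) * (stirling2 k m : ℤ) * ∑ i ∈ s, ((m : ℤ) + 1) ^ f i := by
  simp only [polyBernoulliB, mul_sum]
  rw [sum_comm]

theorem polyBernoulliB_sum_period_upper_general_general (k M : ℕ) (hk : 0 < k)
    (n : ℕ) (hn : ∀ q : ℕ, M.factorization q ≤ n) :
    (∑ i ∈ Finset.range M.totient, polyBernoulliB (n + i) k)
      ≡ 0 [ZMOD (M : ℤ)] := by
  rw [Int.modEq_zero_iff_dvd, sum_polyBernoulliB]
  refine dvd_mul_of_dvd_right (dvd_sum fun m _ => ?_) _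
  obtain _ | m := m
  · obtain ⟨k, rfl⟩ := Nat.exists_eq_add_one_of_ne_zero hk.ne'
    simp [stirling2]
  · refine (dvd_mul_sum_range_totient_pow hn ((m + 1 : ℕ) : ℤ)).trans
      ⟨(-1) ^ (m + 1) * m.factorial * stirling2 k (m + 1), ?_⟩
    push_cast [Nat.factorial_succ]
    ring

theorem polyBernoulliB_sum_period_upper_general (k M : ℕ) (hk : 0 < k) (hM : 0 < M)
    (n : ℕ) (hn : ∀ q : ℕ, M.factorization q ≤ n) :
    (∑ i ∈ Finset.range M.totient, polyBernoulliB (n + i) k)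
      ≡ 0 [ZMOD (M : ℤ)] :=
  polyBernoulliB_sum_period_upper_general_general k M hk n hn
end

section
/- For any prime p ≥ 7, the identity B_{p-3}^{(-(p-3))} = 2 · C_{p-4}^{(-(p-2))} holds between poly-Bernoulli numbers of type B and type C. -/
/-!
With `A_n(f) = (-1)^n ∑ₘ (-1)^m m! S(n, m) f(m)` (`signedStirlingSum n f`) one has
`B_n^{(-k)} = A_n((m + 1)^k)` and, for `n ≥ 1`, `C_{n-1}^{(-k-1)} = A_n(m^k)`. The recurrence
of `S` gives `A_{n+1}(f) = A_n((m + 1) f(m + 1) - m f(m))`, hence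
`A_n(binom(m, j)) = j! S(n + 1, j + 1)`, and expanding powers in binomial coefficients yields the
closed forms `B_n^{(-k)} = ∑ⱼ j!² S(k + 1, j + 1) S(n + 1, j + 1)` and
`C_{n-1}^{(-k-1)} = ∑ⱼ j!² S(k, j) S(n + 1, j + 1)`. In the difference
`B_n^{(-k)} - C_{n-1}^{(-k-1)} - C_{k-1}^{(-n-1)}` the recurrence of `S` leaves the telescoping sum
of `j!² S(n, j) S(k, j)`, so it vanishes; `n = k = p - 3` is the theorem.
-/

open Finset
open Nat (stirlingSecond stirlingSecond_succ_succ stirlingSecond_succ_zero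
  stirlingSecond_eq_zero_of_lt factorial_succ)
open scoped Nat

local notation "S" => stirlingSecond

theorem stirling2_eq_stirlingSecond : stirling2 = S := by
  funext n m
  induction n generalizing m with
  | zero => cases m <;> rfl
  | succ n ih => cases m <;> simp [stirling2, stirlingSecond_succ_succ, ih]

theorem Finset.sum_range_comp_succ_of_eq_zero {M : Type*} [AddCommMonoid M] (f : ℕ → M)
    (n : ℕ) (h0 : f 0 = 0) (hn : f n = 0) :
    ∑ i ∈ range n, f (i + 1) = ∑ i ∈ range n, f i := by
  have h := sum_range_succ' f n
  rw [h0, add_zero, sum_range_succ, hn, add_zero] at h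
  exact h.symm

theorem pow_eq_sum_stirlingSecond_mul_choose (k x : ℕ) :
    x ^ k = ∑ j ∈ range (k + 1), j ! * S k j * x.choose j := by
  induction k with
  | zero => simp
  | succ k ih =>
    have mul_choose (j : ℕ) : x * x.choose j = (j + 1) * x.choose (j + 1) + j * x.choose j := by
      rcases le_or_gt j x with h | h
      · rw [mul_comm (j + 1), Nat.choose_succ_right_eq, mul_comm _ (x - j), ← Nat.add_mul]
        congr 1
        omega
      · simp [Nat.choose_eq_zero_of_lt h, Nat.choose_eq_zero_of_lt (h.trans (lt_add_one j))]
    have shift := sum_range_comp_succ_of_eq_zero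
      (fun j => j ! * S k j * (j * x.choose j)) (k + 1) (by simp)
      (by simp [stirlingSecond_eq_zero_of_lt (lt_add_one k)])
    calc x ^ (k + 1)
        = ∑ j ∈ range (k + 1), j ! * S k j * (x * x.choose j) := by
          rw [pow_succ', ih, mul_sum]
          exact sum_congr rfl fun j _ => by ring
      _ = ∑ j ∈ range (k + 1), (j + 1) ! * S k j * x.choose (j + 1)
          + ∑ j ∈ range (k + 1), j ! * S k j * (j * x.choose j) := by
          rw [← sum_add_distrib]
          refine sum_congr rfl fun j _ => ?_
          rw [mul_choose, factorial_succ]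
          ring
      _ = ∑ j ∈ range (k + 1), (j + 1) ! * S (k + 1) (j + 1) * x.choose (j + 1) := by
          rw [← shift, ← sum_add_distrib]
          refine sum_congr rfl fun j _ => ?_
          rw [stirlingSecond_succ_succ, factorial_succ]
          ring
      _ = ∑ j ∈ range (k + 2), j ! * S (k + 1) j * x.choose j := by
          simp [sum_range_succ' _ (k + 1)]

theorem add_one_pow_eq_sum_stirlingSecond_mul_choose (k x : ℕ) :
    (x + 1) ^ k = ∑ j ∈ range (k + 1), j ! * S (k + 1) (j + 1) * x.choose j := by
  refine Nat.eq_of_mul_eq_mul_left x.succ_pos ?_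
  calc (x + 1) * (x + 1) ^ k
      = ∑ j ∈ range (k + 1), (j + 1) ! * S (k + 1) (j + 1) * (x + 1).choose (j + 1) := by
        rw [← pow_succ', pow_eq_sum_stirlingSecond_mul_choose, sum_range_succ']
        simp
    _ = (x + 1) * ∑ j ∈ range (k + 1), j ! * S (k + 1) (j + 1) * x.choose j := by
        rw [mul_sum]
        refine sum_congr rfl fun j _ => ?_
        rw [factorial_succ]
        linear_combination (j ! * S (k + 1) (j + 1)) * (Nat.add_one_mul_choose_eq x j).symm

theorem succ_mul_choose_succ_sub_mul_choose (m j : ℕ) :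
    ((m : ℤ) + 1) * ((m + 1).choose (j + 1) : ℕ) - m * (m.choose (j + 1) : ℕ)
      = (j + 2) * (m.choose (j + 1) : ℕ) + (j + 1) * (m.choose j : ℕ) := by
  have pascal : ((m + 1).choose (j + 1) : ℤ) = m.choose j + m.choose (j + 1) := by
    exact_mod_cast Nat.choose_succ_succ m j
  have absorb : ((m : ℤ) + 1) * m.choose j = ((m + 1).choose (j + 1) : ℕ) * (j + 1) := by
    exact_mod_cast Nat.add_one_mul_choose_eq m j
  rw [pascal] at absorb ⊢
  linear_combination absorb

def signedStirlingSum (n : ℕ) : (ℕ → ℤ) →ₗ[ℤ] ℤ where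
  toFun f := (-1) ^ n * ∑ m ∈ range (n + 1), (-1) ^ m * m ! * S n m * f m
  map_add' f g := by simp only [Pi.add_apply, mul_add, sum_add_distrib]
  map_smul' c f := by
    simp only [Pi.smul_apply, smul_eq_mul, mul_sum, RingHom.id_apply]
    exact sum_congr rfl fun m _ => by ring

theorem signedStirlingSum_apply (n : ℕ) (f : ℕ → ℤ) : signedStirlingSum n f
    = (-1) ^ n * ∑ m ∈ range (n + 1), (-1) ^ m * m ! * S n m * f m := rfl

theorem signedStirlingSum_succ (n : ℕ) (f : ℕ → ℤ) :
    signedStirlingSum (n + 1) f = signedStirlingSum n fun m => (m + 1) * f (m + 1) - m * f m := by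
  set g : ℕ → ℤ := fun m => (-1) ^ m * m ! * S n m * (m * f m)
  have shift : ∑ m ∈ range (n + 1), g (m + 1) = ∑ m ∈ range (n + 1), g m :=
    sum_range_comp_succ_of_eq_zero g (n + 1) (by simp [g])
      (by simp [g, stirlingSecond_eq_zero_of_lt (lt_add_one n)])
  have termwise (m : ℕ) : (-1) ^ (m + 1) * ((m + 1)! : ℤ) * S (n + 1) (m + 1) * f (m + 1)
      = g (m + 1) - (-1) ^ m * m ! * S n m * ((m + 1) * f (m + 1)) := by
    simp only [g, stirlingSecond_succ_succ, factorial_succ]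
    push_cast
    ring
  rw [signedStirlingSum_apply, signedStirlingSum_apply, sum_range_succ']
  simp only [termwise, sum_sub_distrib, shift, stirlingSecond_succ_zero, mul_sub, g]
  push_cast
  ring

theorem signedStirlingSum_choose (n j : ℕ) :
    signedStirlingSum n (fun m => (m.choose j : ℤ)) = j ! * S (n + 1) (j + 1) := by
  induction n generalizing j with
  | zero =>
    cases j <;>
      simp [signedStirlingSum_apply, Nat.stirlingSecond_self, stirlingSecond_eq_zero_of_lt]
  | succ n ih =>
    rw [signedStirlingSum_succ]
    cases j with
    | zero => simpa [Nat.stirlingSecond_one_right] using ih 0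
    | succ j =>
      have recurrence :
          (fun m : ℕ => ((m : ℤ) + 1) * ((m + 1).choose (j + 1) : ℕ) - m * m.choose (j + 1))
            = (j + 2 : ℤ) • (fun m : ℕ => (m.choose (j + 1) : ℤ))
              + (j + 1 : ℤ) • fun m => (m.choose j : ℤ) :=
        funext fun m => succ_mul_choose_succ_sub_mul_choose m j
      rw [recurrence, map_add, map_smul, map_smul, ih, ih, smul_eq_mul, smul_eq_mul,
        stirlingSecond_succ_succ (n + 1) (j + 1), factorial_succ]
      push_cast
      ring

theorem signedStirlingSum_sum_mul_choose (n : ℕ) (s : Finset ℕ) (c : ℕ → ℤ) :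
    signedStirlingSum n (fun m => ∑ j ∈ s, c j * m.choose j)
      = ∑ j ∈ s, c j * j ! * S (n + 1) (j + 1) := by
  have : (fun m : ℕ => ∑ j ∈ s, c j * m.choose j)
      = ∑ j ∈ s, c j • fun m : ℕ => (m.choose j : ℤ) := by
    funext m
    simp [Finset.sum_apply]
  simp only [this, map_sum, map_smul, signedStirlingSum_choose, smul_eq_mul, mul_assoc]

theorem signedStirlingSum_pow (n k : ℕ) : signedStirlingSum n (fun m => (m : ℤ) ^ k)
    = ∑ j ∈ range (k + 1), (j ! : ℤ) ^ 2 * S k j * S (n + 1) (j + 1) := by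
  have expand : (fun m : ℕ => (m : ℤ) ^ k)
      = fun m => ∑ j ∈ range (k + 1), ((j ! * S k j : ℕ) : ℤ) * m.choose j := by
    funext m
    exact_mod_cast pow_eq_sum_stirlingSecond_mul_choose k m
  rw [expand, signedStirlingSum_sum_mul_choose]
  push_cast
  exact sum_congr rfl fun j _ => by ring

theorem signedStirlingSum_add_one_pow (n k : ℕ) :
    signedStirlingSum n (fun m => ((m : ℤ) + 1) ^ k) = ∑ j ∈ range (k + 1),
        (j ! : ℤ) ^ 2 * S (k + 1) (j + 1) * S (n + 1) (j + 1) := by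
  have expand : (fun m : ℕ => ((m : ℤ) + 1) ^ k)
      = fun m => ∑ j ∈ range (k + 1), ((j ! * S (k + 1) (j + 1) : ℕ) : ℤ) * m.choose j := by
    funext m
    exact_mod_cast add_one_pow_eq_sum_stirlingSecond_mul_choose k m
  rw [expand, signedStirlingSum_sum_mul_choose]
  push_cast
  exact sum_congr rfl fun j _ => by ring

theorem polyBernoulliB_eq_signedStirlingSum (k n : ℕ) :
    polyBernoulliB k n = signedStirlingSum n fun m => ((m : ℤ) + 1) ^ k := by
  rw [polyBernoulliB, stirling2_eq_stirlingSecond, signedStirlingSum_apply]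

theorem polyBernoulliC_succ_eq_signedStirlingSum (k n : ℕ) :
    polyBernoulliC (k + 1) n = signedStirlingSum (n + 1) fun m => (m : ℤ) ^ k := by
  rw [polyBernoulliC, stirling2_eq_stirlingSecond, signedStirlingSum_apply,
    sum_range_succ' _ (n + 1), stirlingSecond_succ_zero, Nat.cast_zero, mul_zero, zero_mul,
    add_zero, mul_sum, mul_sum]
  refine sum_congr rfl fun m _ => ?_
  rw [factorial_succ]
  push_cast
  ring

/-- Kaneko's formula. -/
theorem polyBernoulliB_eq_sum (k n : ℕ) : polyBernoulliB k n
    = ∑ j ∈ range (k + 1),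
        (j ! : ℤ) ^ 2 * S (k + 1) (j + 1) * S (n + 1) (j + 1) := by
  rw [polyBernoulliB_eq_signedStirlingSum, signedStirlingSum_add_one_pow]

theorem polyBernoulliC_succ_eq_sum (k n : ℕ) : polyBernoulliC (k + 1) n
    = ∑ j ∈ range (k + 1), (j ! : ℤ) ^ 2 * S k j * S (n + 2) (j + 1) := by
  rw [polyBernoulliC_succ_eq_signedStirlingSum, signedStirlingSum_pow]

theorem polyBernoulliB_succ_succ_eq_polyBernoulliC_add (k n : ℕ) :
    polyBernoulliB (k + 1) (n + 1) = polyBernoulliC (k + 2) n + polyBernoulliC (n + 2) k := by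
  set N := n + k + 2
  have vanish {a j : ℕ} (h : a < j) : (S a j : ℤ) = 0 := by
    simp [stirlingSecond_eq_zero_of_lt h]
  have hB : polyBernoulliB (k + 1) (n + 1) = ∑ j ∈ range N,
      (j ! : ℤ) ^ 2 * S (k + 2) (j + 1) * S (n + 2) (j + 1) := by
    rw [polyBernoulliB_eq_sum]
    exact (eventually_constant_sum (fun j hj => by simp [vanish (by omega : k + 2 < j + 1)])
      (by omega)).symm
  have hC₁ : polyBernoulliC (k + 2) n = ∑ j ∈ range N,
      (j ! : ℤ) ^ 2 * S (k + 1) j * S (n + 2) (j + 1) := by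
    rw [polyBernoulliC_succ_eq_sum]
    exact (eventually_constant_sum (fun j hj => by simp [vanish (by omega : k + 1 < j)])
      (by omega)).symm
  have hC₂ : polyBernoulliC (n + 2) k = ∑ j ∈ range N,
      (j ! : ℤ) ^ 2 * S (n + 1) j * S (k + 2) (j + 1) := by
    rw [polyBernoulliC_succ_eq_sum]
    exact (eventually_constant_sum (fun j hj => by simp [vanish (by omega : n + 1 < j)])
      (by omega)).symm
  set t : ℕ → ℤ := fun j => (j ! : ℤ) ^ 2 * S (n + 1) j * S (k + 1) j
  have telescope : ∑ j ∈ range N, (t (j + 1) - t j) = 0 := by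
    rw [sum_range_sub]
    simp [t, vanish (by omega : n + 1 < N)]
  rw [hB, hC₁, hC₂, ← sub_eq_zero, ← sum_add_distrib, ← sum_sub_distrib, ← telescope]
  refine sum_congr rfl fun j _ => ?_
  simp only [t, stirlingSecond_succ_succ, factorial_succ]
  push_cast
  ring

theorem polyBernoulliB_eq_two_mul_polyBernoulliC_general (p : ℕ) (hp7 : 7 ≤ p) :
    polyBernoulliB (p - 3) (p - 3) = 2 * polyBernoulliC (p - 2) (p - 4) := by
  obtain ⟨n, rfl⟩ : ∃ n, p = n + 4 := ⟨p - 4, by omega⟩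
  show polyBernoulliB (n + 1) (n + 1) = 2 * polyBernoulliC (n + 2) n
  rw [polyBernoulliB_succ_succ_eq_polyBernoulliC_add, two_mul]

theorem polyBernoulliB_eq_two_mul_polyBernoulliC (p : ℕ) (hp : p.Prime) (hp7 : 7 ≤ p) :
    polyBernoulliB (p - 3) (p - 3) = 2 * polyBernoulliC (p - 2) (p - 4) :=
  polyBernoulliB_eq_two_mul_polyBernoulliC_general p hp7
end
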